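/- Let C ⊆ ℝⁿ be a convex cone (a convex set containing 0 and closed under multiplication by nonnegative real scalars), and let ω ∈ ℤⁿ be such that relint(C) ∩ ℤⁿ = {ω + u : u ∈ C ∩ ℤⁿ}, where relint denotes the intrinsic (relative) interior. Let H ⊆ ℝⁿ be a linear subspace with ω ∈ H. Then relint(C ∩ H) ∩ ℤⁿ = {ω + u : u ∈ C ∩ H ∩ ℤⁿ}. -/

import Mathlib

/-!
Since `ω ∈ relint C ∩ H` (take `u = 0`), `relint (C ∩ H) = relint C ∩ H`: a point `x` of
`relint (C ∩ H)` can be pushed slightly away from `ω` to a point `z` of `C ∩ H`, and then `x`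
lies on the half-open segment `(ω, z]` of the convex set `C`, hence in `relint C`. As `ω ∈ H`,
`x ∈ H` iff `x - ω ∈ H`, so the Gorenstein condition for `C` restricts to `C ∩ H`.
-/

open Set Topology

section

variable {𝕜 V : Type*} [Ring 𝕜] [AddCommGroup V] [Module 𝕜 V] [TopologicalSpace V]

theorem mem_intrinsicInterior_iff_exists_isOpen {s : Set V} {x : V} :
    x ∈ intrinsicInterior 𝕜 s ↔
      x ∈ affineSpan 𝕜 s ∧ ∃ U : Set V, IsOpen U ∧ x ∈ U ∧ U ∩ affineSpan 𝕜 s ⊆ s := by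
  constructor
  · rintro ⟨y, hy, rfl⟩
    obtain ⟨O, hOs, hO, hyO⟩ := mem_interior.1 hy
    obtain ⟨U, hU, rfl⟩ := isOpen_induced_iff.1 hO
    exact ⟨y.2, U, hU, hyO, fun z hz => hOs (show (⟨z, hz.2⟩ : affineSpan 𝕜 s) ∈ _ from hz.1)⟩
  · rintro ⟨hx, U, hU, hxU, hUs⟩
    exact ⟨⟨x, hx⟩, mem_interior.2
      ⟨Subtype.val ⁻¹' U, fun z hz => hUs ⟨hz, z.2⟩, hU.preimage continuous_subtype_val, hxU⟩, rfl⟩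

theorem intrinsicInterior_inter_affineSubspace_subset (s : Set V) (H : AffineSubspace 𝕜 V) :
    intrinsicInterior 𝕜 s ∩ H ⊆ intrinsicInterior 𝕜 (s ∩ H) := by
  rintro x ⟨hx, hxH⟩
  obtain ⟨hxs, U, hU, hxU, hUs⟩ := mem_intrinsicInterior_iff_exists_isOpen.1 hx
  have hspan : affineSpan 𝕜 (s ∩ H) ≤ affineSpan 𝕜 s ⊓ H :=
    le_inf (affineSpan_mono 𝕜 inter_subset_left) (affineSpan_le.2 inter_subset_right)
  refine mem_intrinsicInterior_iff_exists_isOpen.2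
    ⟨subset_affineSpan 𝕜 _ ⟨hUs ⟨hxU, hxs⟩, hxH⟩, U, hU, hxU, ?_⟩
  rintro z ⟨hzU, hz⟩
  obtain ⟨hzs, hzH⟩ := hspan hz
  exact ⟨hUs ⟨hzU, hzs⟩, hzH⟩

end

section

variable {V : Type*} [AddCommGroup V] [Module ℝ V] [TopologicalSpace V]
  [IsTopologicalAddGroup V] [ContinuousSMul ℝ V]

theorem exists_pos_add_smul_sub_mem_of_mem_intrinsicInterior {s : Set V} {x y : V}
    (hx : x ∈ intrinsicInterior ℝ s) (hy : y ∈ s) :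
    ∃ t : ℝ, 0 < t ∧ x + t • (x - y) ∈ s := by
  obtain ⟨hxs, U, hU, hxU, hUs⟩ := mem_intrinsicInterior_iff_exists_isOpen.1 hx
  have hcont : Continuous fun t : ℝ => x + t • (x - y) := by fun_prop
  have hnear : ∀ᶠ t : ℝ in 𝓝 0, x + t • (x - y) ∈ U :=
    hcont.continuousAt.preimage_mem_nhds (by simpa using hU.mem_nhds hxU)
  obtain ⟨t, htU, ht⟩ := ((hnear.filter_mono nhdsWithin_le_nhds).and
    (self_mem_nhdsWithin (s := Ioi (0 : ℝ)))).exists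
  refine ⟨t, ht, hUs ⟨htU, ?_⟩⟩
  have hdir : t • (x - y) ∈ (affineSpan ℝ s).direction :=
    Submodule.smul_mem _ t (AffineSubspace.vsub_mem_direction hxs (subset_affineSpan ℝ s hy))
  simpa [add_comm] using AffineSubspace.vadd_mem_of_mem_direction hdir hxs

theorem Convex.combo_intrinsicInterior_self_mem_intrinsicInterior {s : Set V} (hs : Convex ℝ s)
    {x y : V} (hx : x ∈ intrinsicInterior ℝ s) (hy : y ∈ s) {a b : ℝ} (ha : 0 < a) (hb : 0 ≤ b)
    (hab : a + b = 1) : a • x + b • y ∈ intrinsicInterior ℝ s := by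
  obtain ⟨hxs, U, hU, hxU, hUs⟩ := mem_intrinsicInterior_iff_exists_isOpen.1 hx
  have hys : y ∈ affineSpan ℝ s := subset_affineSpan ℝ s hy
  -- `w ↦ a⁻¹ • (w - b • y)` inverts the homothety `v ↦ a • v + b • y` of centre `y`
  set g : V → V := fun w => a⁻¹ • (w - b • y) with hg
  have hg_mem : ∀ w ∈ affineSpan ℝ s, g w ∈ affineSpan ℝ s := by
    intro w hw
    have hdir : a⁻¹ • (w - y) ∈ (affineSpan ℝ s).direction :=
      Submodule.smul_mem _ _ (AffineSubspace.vsub_mem_direction hw hys)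
    convert AffineSubspace.vadd_mem_of_mem_direction hdir hys using 1
    simp only [hg, vadd_eq_add]
    obtain rfl : b = 1 - a := by linarith
    match_scalars
    · field_simp
    · field_simp; ring
  have hg_inv : ∀ w, a • g w + b • y = w := by
    intro w; simp [hg, smul_smul, ha.ne']
  refine mem_intrinsicInterior_iff_exists_isOpen.2
    ⟨subset_affineSpan ℝ s (hs (hUs ⟨hxU, hxs⟩) hy ha.le hb hab), g ⁻¹' U,
      hU.preimage (by fun_prop), ?_, ?_⟩
  · simpa [hg, smul_smul, ha.ne'] using hxU
  · rintro w ⟨hwU, hw⟩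
    rw [← hg_inv w]
    exact hs (hUs ⟨hwU, hg_mem w hw⟩) hy ha.le hb hab

-- Rockafellar, *Convex Analysis*, Theorem 6.5, in the case where one of the two sets is affine.
theorem Convex.intrinsicInterior_inter_affineSubspace {s : Set V} (hs : Convex ℝ s)
    (H : AffineSubspace ℝ V) {y : V} (hy : y ∈ intrinsicInterior ℝ s) (hyH : y ∈ H) :
    intrinsicInterior ℝ (s ∩ H) = intrinsicInterior ℝ s ∩ H := by
  refine subset_antisymm ?_ (intrinsicInterior_inter_affineSubspace_subset s H)
  intro x hx
  obtain ⟨hxs, hxH⟩ := intrinsicInterior_subset hx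
  refine ⟨?_, hxH⟩
  obtain ⟨t, ht, hz⟩ :=
    exists_pos_add_smul_sub_mem_of_mem_intrinsicInterior hx ⟨intrinsicInterior_subset hy, hyH⟩
  have hcombo : (t / (1 + t)) • y + (1 / (1 + t)) • (x + t • (x - y)) = x := by
    match_scalars
    · field_simp; ring
    · field_simp
  rw [← hcombo]
  exact hs.combo_intrinsicInterior_self_mem_intrinsicInterior hy hz.1 (by positivity)
    (by positivity) (by field_simp; ring)

end

theorem stmt_10 (n : ℕ) (C : Set (Fin n → ℝ))
    (hconv : Convex ℝ C) (h0 : (0 : Fin n → ℝ) ∈ C)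
    (ω : Fin n → ℤ)
    (hGor : ∀ x : Fin n → ℤ,
      ((fun t => (x t : ℝ)) ∈ intrinsicInterior ℝ C) ↔
        ∃ u : Fin n → ℤ, ((fun t => (u t : ℝ)) ∈ C) ∧ x = ω + u)
    (H : Submodule ℝ (Fin n → ℝ))
    (hω : (fun t => (ω t : ℝ)) ∈ H) :
    ∀ x : Fin n → ℤ,
      ((fun t => (x t : ℝ)) ∈ intrinsicInterior ℝ (C ∩ (H : Set (Fin n → ℝ)))) ↔
        ∃ u : Fin n → ℤ,
          ((fun t => (u t : ℝ)) ∈ C ∩ (H : Set (Fin n → ℝ))) ∧ x = ω + u := by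
  have hω_relint : (fun t => (ω t : ℝ)) ∈ intrinsicInterior ℝ C :=
    (hGor ω).2 ⟨0, by simpa [← Pi.zero_def] using h0, (add_zero ω).symm⟩
  have hrelint : intrinsicInterior ℝ (C ∩ H) = intrinsicInterior ℝ C ∩ H :=
    hconv.intrinsicInterior_inter_affineSubspace H hω_relint hω
  have hcast_add (a b : Fin n → ℤ) :
      (fun t => ((a + b) t : ℝ)) = (fun t => (a t : ℝ)) + fun t => (b t : ℝ) := by
    ext; simp
  intro x
  rw [hrelint, mem_inter_iff, hGor]
  constructor
  · rintro ⟨⟨u, huC, rfl⟩, hxH⟩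
    rw [hcast_add] at hxH
    exact ⟨u, ⟨huC, (H.add_mem_iff_right hω).1 hxH⟩, rfl⟩
  · rintro ⟨u, ⟨huC, huH⟩, rfl⟩
    exact ⟨⟨u, huC, rfl⟩, hcast_add ω u ▸ H.add_mem hω huH⟩
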